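/- arXiv:2501.11437 — 3 statements merged into one kernel-verified Lean document; each statement's English description precedes it below -/
import Mathlib

section
/- Let n ≥ 4 and let t be a nonnegative integer. If there exist an integer k ≥ 1, reals a_1,...,a_k > 0, integers 0 ≤ s_i ≤ n-1 and reals W_1,...,W_k > 0 forming a weighted spherical t-design of generalized corner-vector type on S^{n-1}, then t ≤ 15. -/
open MeasureTheory

/-- The generalized corner vector `v_{a,s} = (a^2+s)^{-1/2} (a,1,...,1,0,...,0)`
(with `s` ones after the first coordinate `a`) in `ℝ^n`. -/
noncomputable def cornerVec (n : ℕ) (a : ℝ) (s : ℕ) : EuclideanSpace ℝ (Fin n) :=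
  WithLp.toLp 2 (fun i => (Real.sqrt (a ^ 2 + s))⁻¹ *
    (if (i : ℕ) = 0 then a else if (i : ℕ) ≤ s then 1 else 0))

/-- The orbit `v_{a,s}^{B_n}` of the generalized corner vector under the
hyperoctahedral group (coordinate permutations and sign changes). -/
noncomputable def cornerOrbit (n : ℕ) (a : ℝ) (s : ℕ) : Finset (EuclideanSpace ℝ (Fin n)) :=
  @Finset.image _ _ (Classical.decEq _)
    (fun p : Equiv.Perm (Fin n) × (Fin n → Bool) =>
      (WithLp.toLp 2 (fun i => (if p.2 i then (-1 : ℝ) else 1) * cornerVec n a s (p.1 i)) :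
        EuclideanSpace ℝ (Fin n)))
    Finset.univ

/-- The average `(1/|S^{n-1}|) ∫_{S^{n-1}} f dρ` of a polynomial over the unit sphere,
with respect to the surface ((n-1)-dimensional Hausdorff) measure. -/
noncomputable def sphereAvg (n : ℕ) (f : MvPolynomial (Fin n) ℝ) : ℝ :=
  ⨍ x in Metric.sphere (0 : EuclideanSpace ℝ (Fin n)) 1,
    MvPolynomial.eval (fun i => x i) f ∂ μH[(n : ℝ) - 1]

/-- The sum `Σ_{x ∈ v_{a,s}^{B_n}} f(x)`. -/
noncomputable def orbitSum (n : ℕ) (a : ℝ) (s : ℕ) (f : MvPolynomial (Fin n) ℝ) : ℝ :=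
  ∑ y ∈ cornerOrbit n a s, MvPolynomial.eval (fun i => y i) f

/-- A weighted spherical `t`-design of generalized corner-vector type on `S^{n-1}`:
the spherical average of every polynomial of total degree at most `t` equals the
weighted sum over the orbits `v_{a_i,s_i}^{B_n}` with weights `W_i`. -/
def isDesign (n t k : ℕ) (a : Fin k → ℝ) (s : Fin k → ℕ) (W : Fin k → ℝ) : Prop :=
  ∀ f : MvPolynomial (Fin n) ℝ, f.totalDegree ≤ t →
    sphereAvg n f = ∑ i, W i * orbitSum n (a i) (s i) f

/-!
If `t ≥ 16`, test the design against the degree-16 polynomial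
`F = (G₀₁ G₂₃)² + (G₀₂ G₁₃)² + (G₀₃ G₁₂)²`,
where `G_jk = x_j x_k (x_j² - x_k²)`.
All coordinates but one of a point of a corner orbit lie in `{0, ±r}`, and `G_jk` vanishes
when `x_j, x_k ∈ {0, ±r}`. Each term of `F` involves two disjoint index pairs, one of which
avoids the exceptional coordinate, so `F` vanishes on every orbit and the weighted orbit sums
are `0`. On the other hand `F ≥ 0` is positive at a point of the sphere, hence on a relatively
open set of positive surface measure, so its spherical average is positive.
-/

open MvPolynomial

namespace CornerDesign

section Obstruction

variable {σ R : Type*} [CommRing R]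

noncomputable def skewQuartic (i j : σ) : MvPolynomial σ R :=
  X i * X j * (X i ^ 2 - X j ^ 2)

noncomputable def obstruction (i : Fin 4 → σ) : MvPolynomial σ R :=
  (skewQuartic (i 0) (i 1) * skewQuartic (i 2) (i 3)) ^ 2 +
    (skewQuartic (i 0) (i 2) * skewQuartic (i 1) (i 3)) ^ 2 +
    (skewQuartic (i 0) (i 3) * skewQuartic (i 1) (i 2)) ^ 2

theorem isHomogeneous_skewQuartic (i j : σ) :
    (skewQuartic i j : MvPolynomial σ R).IsHomogeneous 4 :=
  ((isHomogeneous_X R i).mul (isHomogeneous_X R j)).mul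
    ((isHomogeneous_X_pow i 2).sub (isHomogeneous_X_pow j 2))

theorem isHomogeneous_obstruction (i : Fin 4 → σ) :
    (obstruction i : MvPolynomial σ R).IsHomogeneous 16 := by
  have h (a b c d : σ) :
      ((skewQuartic a b * skewQuartic c d) ^ 2 : MvPolynomial σ R).IsHomogeneous 16 :=
    ((isHomogeneous_skewQuartic a b).mul (isHomogeneous_skewQuartic c d)).pow 2
  exact ((h _ _ _ _).add (h _ _ _ _)).add (h _ _ _ _)

variable {x : σ → R}

@[simp]
theorem eval_skewQuartic (i j : σ) :
    eval x (skewQuartic i j) = x i * x j * (x i ^ 2 - x j ^ 2) := by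
  simp [skewQuartic]

theorem eval_skewQuartic_eq_zero {r : R} {i j : σ} (hi : x i = 0 ∨ x i ^ 2 = r ^ 2)
    (hj : x j = 0 ∨ x j ^ 2 = r ^ 2) : eval x (skewQuartic i j) = 0 := by
  rw [eval_skewQuartic]
  rcases hi with hi | hi
  · simp [hi]
  rcases hj with hj | hj
  · simp [hj]
  simp [hi, hj]

theorem eval_mul_skewQuartic_eq_zero {r : R} {c : σ}
    (hx : ∀ j ≠ c, x j = 0 ∨ x j ^ 2 = r ^ 2) {i j k l : σ} (hik : i ≠ k) (hil : i ≠ l)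
    (hjk : j ≠ k) (hjl : j ≠ l) :
    eval x (skewQuartic i j * skewQuartic k l) = 0 := by
  rw [map_mul]
  by_cases hc : i = c ∨ j = c
  · have hk : k ≠ c := by rintro rfl; tauto
    have hl : l ≠ c := by rintro rfl; tauto
    rw [eval_skewQuartic_eq_zero (hx k hk) (hx l hl), mul_zero]
  · rw [not_or] at hc
    rw [eval_skewQuartic_eq_zero (hx i hc.1) (hx j hc.2), zero_mul]

theorem eval_obstruction_eq_zero {r : R} {c : σ}
    (hx : ∀ j ≠ c, x j = 0 ∨ x j ^ 2 = r ^ 2) {i : Fin 4 → σ} (hi : Function.Injective i) :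
    eval x (obstruction i) = 0 := by
  have hne (a b : Fin 4) (h : a ≠ b := by decide) : i a ≠ i b := hi.ne h
  simp only [obstruction, map_add, map_pow]
  rw [eval_mul_skewQuartic_eq_zero hx (hne 0 2) (hne 0 3) (hne 1 2) (hne 1 3),
    eval_mul_skewQuartic_eq_zero hx (hne 0 1) (hne 0 3) (hne 2 1) (hne 2 3),
    eval_mul_skewQuartic_eq_zero hx (hne 0 1) (hne 0 2) (hne 3 1) (hne 3 2)]
  norm_num

variable [LinearOrder R] [IsStrictOrderedRing R]

theorem eval_obstruction_nonneg (i : Fin 4 → σ) : 0 ≤ eval x (obstruction i) := by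
  simp only [obstruction, map_add, map_pow]
  positivity

theorem eval_obstruction_pos {i : Fin 4 → σ} (h0 : x (i 0) ≠ 0) (h1 : x (i 1) ≠ 0)
    (h2 : x (i 2) ≠ 0) (h3 : x (i 3) ≠ 0) (h01 : x (i 0) ^ 2 ≠ x (i 1) ^ 2)
    (h23 : x (i 2) ^ 2 ≠ x (i 3) ^ 2) : 0 < eval x (obstruction i) := by
  have h01' := sub_ne_zero.2 h01
  have h23' := sub_ne_zero.2 h23
  simp only [obstruction, map_add, map_pow, map_mul, eval_skewQuartic]
  positivity

end Obstruction

theorem cornerVec_eq_zero_or_sq_eq {n : ℕ} (a : ℝ) (s : ℕ) {j : Fin n}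
    (hj : (j : ℕ) ≠ 0) :
    cornerVec n a s j = 0 ∨ cornerVec n a s j ^ 2 = (√(a ^ 2 + s))⁻¹ ^ 2 := by
  by_cases hjs : (j : ℕ) ≤ s <;> simp [cornerVec, hj, hjs]

theorem exists_forall_ne_of_mem_cornerOrbit {n : ℕ} [NeZero n] {a : ℝ} {s : ℕ}
    {y : EuclideanSpace ℝ (Fin n)} (hy : y ∈ cornerOrbit n a s) :
    ∃ c, ∀ j ≠ c, y j = 0 ∨ y j ^ 2 = (√(a ^ 2 + s))⁻¹ ^ 2 := by
  obtain ⟨⟨p, ε⟩, -, rfl⟩ := (@Finset.mem_image _ _ (Classical.decEq _) _ _ _).1 hy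
  refine ⟨p.symm 0, fun j hj => ?_⟩
  have hpj : ((p j : Fin n) : ℕ) ≠ 0 := by
    rwa [Ne, ← Fin.val_zero n, Fin.val_inj, ← p.eq_symm_apply]
  rcases cornerVec_eq_zero_or_sq_eq a s hpj with h | h <;> cases ε j <;> simp [h]

theorem orbitSum_obstruction {n : ℕ} (a : ℝ) (s : ℕ) {i : Fin 4 → Fin n}
    (hi : Function.Injective i) : orbitSum n a s (obstruction i) = 0 := by
  have : NeZero n := ⟨(i 0).pos.ne'⟩
  refine Finset.sum_eq_zero fun y hy => ?_
  obtain ⟨c, hc⟩ := exists_forall_ne_of_mem_cornerOrbit hy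
  exact eval_obstruction_eq_zero hc hi

theorem orbitSum_one_pos (n : ℕ) (a : ℝ) (s : ℕ) : 0 < orbitSum n a s 1 := by
  have : (cornerOrbit n a s).Nonempty :=
    (@Finset.image_nonempty _ _ (Classical.decEq _) _ _).2 Finset.univ_nonempty
  simpa [orbitSum] using this

section HemisphereGraph

variable {m : ℕ}

noncomputable def hemisphereGraph (w : EuclideanSpace ℝ (Fin m)) :
    EuclideanSpace ℝ (Fin (m + 1)) :=
  WithLp.toLp 2 (Fin.cons √(1 - ‖w‖ ^ 2) w.ofLp)

@[simp]
theorem hemisphereGraph_zero (w : EuclideanSpace ℝ (Fin m)) :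
    hemisphereGraph w 0 = √(1 - ‖w‖ ^ 2) := rfl

@[simp]
theorem hemisphereGraph_succ (w : EuclideanSpace ℝ (Fin m)) (j : Fin m) :
    hemisphereGraph w j.succ = w j := rfl

theorem sq_norm_eq_sq_add_sq_norm_tail (x : EuclideanSpace ℝ (Fin (m + 1))) :
    ‖x‖ ^ 2 = x 0 ^ 2 + ‖WithLp.toLp 2 (Fin.tail x.ofLp)‖ ^ 2 := by
  simp [EuclideanSpace.real_norm_sq_eq, Fin.sum_univ_succ, Fin.tail]

theorem continuous_hemisphereGraph : Continuous (hemisphereGraph (m := m)) :=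
  (PiLp.continuous_toLp 2 _).comp <|
    (Real.continuous_sqrt.comp (continuous_const.sub (continuous_norm.pow 2))).finCons
      (PiLp.continuous_ofLp 2 _)

theorem antilipschitzWith_hemisphereGraph : AntilipschitzWith 1 (hemisphereGraph (m := m)) := by
  refine AntilipschitzWith.of_le_mul_dist fun w w' => ?_
  rw [NNReal.coe_one, one_mul, EuclideanSpace.dist_eq, EuclideanSpace.dist_eq, Fin.sum_univ_succ]
  exact Real.sqrt_le_sqrt (le_add_of_nonneg_left (sq_nonneg _))

theorem norm_hemisphereGraph {w : EuclideanSpace ℝ (Fin m)} (hw : ‖w‖ ≤ 1) :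
    ‖hemisphereGraph w‖ = 1 := by
  have h := sq_norm_eq_sq_add_sq_norm_tail (hemisphereGraph w)
  have h1 : 0 ≤ 1 - ‖w‖ ^ 2 := by nlinarith [norm_nonneg w]
  rw [hemisphereGraph_zero, Real.sq_sqrt h1] at h
  change ‖hemisphereGraph w‖ ^ 2 = 1 - ‖w‖ ^ 2 + ‖w‖ ^ 2 at h
  rwa [sub_add_cancel, pow_eq_one_iff_of_nonneg (norm_nonneg _) two_ne_zero] at h

theorem hemisphereGraph_tail {x : EuclideanSpace ℝ (Fin (m + 1))} (hx : ‖x‖ = 1)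
    (hx0 : 0 ≤ x 0) :
    hemisphereGraph (WithLp.toLp 2 (Fin.tail x.ofLp)) = x := by
  have h := sq_norm_eq_sq_add_sq_norm_tail x
  ext i
  cases i using Fin.cases with
  | zero => rw [hemisphereGraph_zero, ← Real.sqrt_sq hx0]; congr 1; rw [hx] at h; linarith
  | succ j => rfl

/-- The chart is `1`-antilipschitz and `μH[m]` is an additive Haar measure on `ℝ^m`, so the
image of a small ball around `Fin.tail x` has positive measure. -/
theorem hausdorffMeasure_inter_sphere_pos {U : Set (EuclideanSpace ℝ (Fin (m + 1)))}
    (hU : IsOpen U) {x : EuclideanSpace ℝ (Fin (m + 1))} (hxU : x ∈ U) (hx : ‖x‖ = 1)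
    (hx0 : 0 < x 0) : 0 < μH[m] (U ∩ Metric.sphere 0 1) := by
  set w : EuclideanSpace ℝ (Fin m) := WithLp.toLp 2 (Fin.tail x.ofLp)
  have hgw : hemisphereGraph w = x := hemisphereGraph_tail hx hx0.le
  have hw : ‖w‖ < 1 := by
    have h := sq_norm_eq_sq_add_sq_norm_tail x
    rw [hx] at h
    exact (pow_lt_one_iff_of_nonneg (norm_nonneg w) two_ne_zero).1 (by nlinarith)
  have hV : IsOpen (hemisphereGraph ⁻¹' U ∩ Metric.ball 0 1) :=
    (hU.preimage continuous_hemisphereGraph).inter Metric.isOpen_ball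
  obtain ⟨δ, hδ, hball⟩ :=
    Metric.isOpen_iff.1 hV w ⟨by rwa [Set.mem_preimage, hgw], by simpa⟩
  have himage : hemisphereGraph '' Metric.ball w δ ⊆ U ∩ Metric.sphere 0 1 := by
    rintro _ ⟨v, hv, rfl⟩
    obtain ⟨hvU, hv1⟩ := hball hv
    exact ⟨hvU, by simpa using norm_hemisphereGraph (mem_ball_zero_iff.1 hv1).le⟩
  have hball_pos : 0 < μH[m] (Metric.ball w δ) := by
    simpa using Metric.measure_ball_pos
      μH[(Module.finrank ℝ (EuclideanSpace ℝ (Fin m)) : ℝ)] w hδ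
  calc 0 < μH[m] (Metric.ball w δ) := hball_pos
    _ ≤ μH[m] (hemisphereGraph '' Metric.ball w δ) := by
      simpa using antilipschitzWith_hemisphereGraph.le_hausdorffMeasure_image
        (Nat.cast_nonneg m) (Metric.ball w δ)
    _ ≤ μH[m] (U ∩ Metric.sphere 0 1) := measure_mono himage

end HemisphereGraph

section Average

variable {X E : Type*} [MeasurableSpace X] {μ : Measure X} {K : Set X}

theorem measure_ne_top_of_setAverage_ne_zero [NormedAddCommGroup E] [NormedSpace ℝ E]
    {f : X → E} (h : ⨍ x in K, f x ∂μ ≠ 0) : μ K ≠ ⊤ := by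
  contrapose! h
  rw [setAverage_eq, measureReal_def, h, ENNReal.toReal_top, inv_zero, zero_smul]

theorem setAverage_pos_of_continuous [TopologicalSpace X] [T2Space X] [OpensMeasurableSpace X]
    (hK : IsCompact K) (hμK : μ K ≠ ⊤) {f : X → ℝ} (hf : Continuous f)
    (hf0 : ∀ x ∈ K, 0 ≤ f x) (hpos : 0 < μ (Function.support f ∩ K)) :
    0 < ⨍ x in K, f x ∂μ := by
  have hμK0 : μ K ≠ 0 := (hpos.trans_le (measure_mono Set.inter_subset_right)).ne'
  obtain ⟨C, hC⟩ := hK.exists_bound_of_continuousOn hf.continuousOn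
  have hint : IntegrableOn f K μ := .of_bound hμK.lt_top hf.aestronglyMeasurable C
    (ae_restrict_of_forall_mem hK.measurableSet hC)
  rw [setAverage_eq, smul_eq_mul]
  refine mul_pos (inv_pos.2 (ENNReal.toReal_pos hμK0 hμK)) ?_
  rwa [setIntegral_pos_iff_support_of_nonneg_ae
    (ae_restrict_of_forall_mem hK.measurableSet hf0) hint]

end Average

theorem sphereAvg_pos {m : ℕ} {f : MvPolynomial (Fin (m + 1)) ℝ}
    (hS : μH[(m : ℝ)] (Metric.sphere (0 : EuclideanSpace ℝ (Fin (m + 1))) 1) ≠ ⊤)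
    (hf : ∀ x, 0 ≤ eval x f) {x : EuclideanSpace ℝ (Fin (m + 1))} (hx : ‖x‖ = 1)
    (hx0 : 0 < x 0) (hfx : 0 < eval x.ofLp f) : 0 < sphereAvg (m + 1) f := by
  have hcont : Continuous fun y : EuclideanSpace ℝ (Fin (m + 1)) => eval y.ofLp f :=
    (continuous_eval f).comp (PiLp.continuous_ofLp 2 _)
  rw [sphereAvg, Nat.cast_succ, add_sub_cancel_right]
  refine setAverage_pos_of_continuous (isCompact_sphere 0 1) hS hcont (fun y _ => hf _) ?_
  exact hausdorffMeasure_inter_sphere_pos hcont.isOpen_support hfx.ne' (by simpa using hx) hx0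

theorem exists_eval_obstruction_pos (p : ℕ) :
    ∃ x : EuclideanSpace ℝ (Fin (p + 4)), ‖x‖ = 1 ∧ 0 < x 0 ∧
      0 < eval x.ofLp (obstruction (Fin.castLE (Nat.le_add_left 4 p))) := by
  -- `4² + 2² + 2² + 1² = 5²`
  set y : Fin (p + 4) → ℝ := Fin.cons (4 / 5) (Fin.cons (2 / 5) (Fin.cons (2 / 5)
    (Fin.cons (1 / 5) 0)))
  set i : Fin 4 → Fin (p + 4) := Fin.castLE (Nat.le_add_left 4 p)
  have h0 : y (i 0) = 4 / 5 := rfl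
  have h1 : y (i 1) = 2 / 5 := rfl
  have h2 : y (i 2) = 2 / 5 := rfl
  have h3 : y (i 3) = 1 / 5 := rfl
  refine ⟨WithLp.toLp 2 y, ?_, by norm_num [y], ?_⟩
  · rw [← pow_eq_one_iff_of_nonneg (norm_nonneg _) two_ne_zero, EuclideanSpace.real_norm_sq_eq]
    norm_num [y, Fin.sum_univ_succ]
  · apply eval_obstruction_pos <;> norm_num [h0, h1, h2, h3]

end CornerDesign

open CornerDesign in
/-- Uniform degree bound for weighted designs of generalized corner-vector type,
`n ≥ 4`. -/
theorem degree_bound (n t : ℕ) (hn : 4 ≤ n)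
    (h : ∃ (k : ℕ) (a : Fin k → ℝ) (s : Fin k → ℕ) (W : Fin k → ℝ),
      1 ≤ k ∧ (∀ i, 0 < a i) ∧ (∀ i, s i ≤ n - 1) ∧ (∀ i, 0 < W i) ∧
      isDesign n t k a s W) :
    t ≤ 15 := by
  obtain ⟨k, a, s, W, hk, -, -, hW, hD⟩ := h
  obtain ⟨p, rfl⟩ : ∃ p, n = p + 4 := ⟨n - 4, by omega⟩
  by_contra! ht
  -- Testing against `1` shows that the sphere has finite measure: otherwise every average
  -- would be the junk value `0`.
  have hvol : sphereAvg (p + 4) 1 ≠ 0 := by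
    rw [hD 1 (by simp)]
    exact (Finset.sum_pos (fun i _ => mul_pos (hW i) (orbitSum_one_pos _ _ _))
      ⟨⟨0, hk⟩, Finset.mem_univ _⟩).ne'
  have hS := measure_ne_top_of_setAverage_ne_zero hvol
  rw [show ((p + 4 : ℕ) : ℝ) - 1 = ((p + 3 : ℕ) : ℝ) by push_cast; ring] at hS
  set i : Fin 4 → Fin (p + 4) := Fin.castLE (Nat.le_add_left 4 p)
  have hF := hD (obstruction i) ((isHomogeneous_obstruction i).totalDegree_le.trans ht)
  have hi : Function.Injective i := Fin.castLE_injective _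
  simp only [orbitSum_obstruction _ _ hi, mul_zero, Finset.sum_const_zero] at hF
  obtain ⟨x, hx, hx0, hFx⟩ := exists_eval_obstruction_pos p
  exact (sphereAvg_pos hS (fun _ => eval_obstruction_nonneg i) hx hx0 hFx).ne' hF
end

section
/- Let n ≥ 4. Suppose there exists a weighted spherical t-design of generalized corner-vector type on S^{n-1} given by data (a_i, s_i, W_i), i = 1,...,k, such that s_i ≥ 3 for at least one index i. Then t ≤ 15. -/
open MeasureTheory

/-! The degree-`16` polynomial `P = ∑ x_i² x_j² (x_i² - x_j²)² x_k² x_l² (x_k² - x_l²)²`, summed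
over pairs of indices `(i, j)`, `(k, l)` with `{i, j} ∩ {k, l} = ∅`, is nonnegative and vanishes on
every orbit `v_{a,s}^{B_n}`: off one coordinate, the squared coordinates of a point of the orbit
only take the values `0` and `1/(a² + s)`. So a `16`-design would give `P` spherical average `0`.
But `P` is positive near `(1, 2, 3, 4, 0, …, 0)/√30`, and a spherical cap has positive
`(n-1)`-dimensional Hausdorff measure, since forgetting the first coordinate is `1`-Lipschitz and
maps the cap onto an open subset of `ℝ^{n-1}`. -/

open MvPolynomial Finset

section CornerPoly

variable {σ R : Type*} [CommRing R]

noncomputable def pairPoly (i j : σ) : MvPolynomial σ R :=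
  X i ^ 2 * X j ^ 2 * (X i ^ 2 - X j ^ 2) ^ 2

noncomputable def cornerPoly (σ R : Type*) [CommRing R] [Fintype σ] [DecidableEq σ] :
    MvPolynomial σ R :=
  ∑ q : (σ × σ) × (σ × σ) with q.1.1 ≠ q.2.1 ∧ q.1.1 ≠ q.2.2 ∧ q.1.2 ≠ q.2.1 ∧ q.1.2 ≠ q.2.2,
    pairPoly q.1.1 q.1.2 * pairPoly q.2.1 q.2.2

theorem isHomogeneous_pairPoly (i j : σ) : (pairPoly i j : MvPolynomial σ R).IsHomogeneous 8 :=
  ((isHomogeneous_X_pow i 2).mul (isHomogeneous_X_pow j 2)).mul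
    (((isHomogeneous_X_pow i 2).sub (isHomogeneous_X_pow j 2)).pow 2)

theorem totalDegree_cornerPoly_le [Fintype σ] [DecidableEq σ] :
    (cornerPoly σ R).totalDegree ≤ 16 :=
  (IsHomogeneous.sum _ _ 16 fun _ _ =>
    (isHomogeneous_pairPoly _ _).mul (isHomogeneous_pairPoly _ _)).totalDegree_le

@[simp]
theorem eval_pairPoly (x : σ → R) (i j : σ) :
    eval x (pairPoly i j) = x i ^ 2 * x j ^ 2 * (x i ^ 2 - x j ^ 2) ^ 2 := by
  simp [pairPoly]

theorem eval_pairPoly_eq_zero {x : σ → R} {c : R} {i j : σ} (hi : x i ^ 2 = 0 ∨ x i ^ 2 = c)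
    (hj : x j ^ 2 = 0 ∨ x j ^ 2 = c) : eval x (pairPoly i j) = 0 := by
  rw [eval_pairPoly]
  rcases hi with hi | hi <;> rcases hj with hj | hj <;> simp [hi, hj]

theorem eval_cornerPoly [Fintype σ] [DecidableEq σ] (x : σ → R) :
    eval x (cornerPoly σ R) =
      ∑ q : (σ × σ) × (σ × σ) with q.1.1 ≠ q.2.1 ∧ q.1.1 ≠ q.2.2 ∧ q.1.2 ≠ q.2.1 ∧ q.1.2 ≠ q.2.2,
        eval x (pairPoly q.1.1 q.1.2) * eval x (pairPoly q.2.1 q.2.2) := by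
  simp only [cornerPoly, map_sum, map_mul]

/-- Of two disjoint pairs of indices, one avoids `i₀`. -/
theorem eval_cornerPoly_eq_zero [Fintype σ] [DecidableEq σ] {x : σ → R} {c : R} (i₀ : σ)
    (hx : ∀ m ≠ i₀, x m ^ 2 = 0 ∨ x m ^ 2 = c) : eval x (cornerPoly σ R) = 0 := by
  rw [eval_cornerPoly]
  refine sum_eq_zero fun ⟨⟨i, j⟩, k, l⟩ hq => ?_
  obtain ⟨hik, hil, hjk, hjl⟩ := (mem_filter.mp hq).2
  by_cases h : i ≠ i₀ ∧ j ≠ i₀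
  · rw [eval_pairPoly_eq_zero (hx i h.1) (hx j h.2), zero_mul]
  · have hi₀ : i = i₀ ∨ j = i₀ := by tauto
    have hk : k ≠ i₀ := by rintro rfl; tauto
    have hl : l ≠ i₀ := by rintro rfl; tauto
    rw [eval_pairPoly_eq_zero (hx k hk) (hx l hl), mul_zero]

end CornerPoly

section Order

variable {σ R : Type*} [CommRing R] [LinearOrder R] [IsStrictOrderedRing R]

theorem eval_pairPoly_nonneg (x : σ → R) (i j : σ) : 0 ≤ eval x (pairPoly i j) := by
  rw [eval_pairPoly]; positivity

theorem eval_pairPoly_pos {x : σ → R} {i j : σ} (hi : 0 < x i) (hij : x i < x j) :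
    0 < eval x (pairPoly i j) := by
  have hj : 0 < x j := hi.trans hij
  have hsq : x i ^ 2 - x j ^ 2 ≠ 0 := (sub_neg.mpr (pow_lt_pow_left₀ hij hi.le two_ne_zero)).ne
  rw [eval_pairPoly]; positivity

variable [Fintype σ] [DecidableEq σ]

theorem eval_cornerPoly_nonneg (x : σ → R) : 0 ≤ eval x (cornerPoly σ R) := by
  rw [eval_cornerPoly]
  exact sum_nonneg fun q _ => mul_nonneg (eval_pairPoly_nonneg _ _ _) (eval_pairPoly_nonneg _ _ _)

theorem eval_cornerPoly_pos {x : σ → R} {i j k l : σ} (hik : i ≠ k) (hil : i ≠ l) (hjk : j ≠ k)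
    (hjl : j ≠ l) (hi : 0 < x i) (hij : x i < x j) (hk : 0 < x k) (hkl : x k < x l) :
    0 < eval x (cornerPoly σ R) := by
  rw [eval_cornerPoly]
  refine sum_pos' (fun q _ => mul_nonneg (eval_pairPoly_nonneg _ _ _)
    (eval_pairPoly_nonneg _ _ _)) ⟨((i, j), (k, l)), by simp [*], ?_⟩
  exact mul_pos (eval_pairPoly_pos hi hij) (eval_pairPoly_pos hk hkl)

end Order

theorem sq_cornerVec_of_ne_zero (n : ℕ) (a : ℝ) (s : ℕ) {j : Fin n} (hj : (j : ℕ) ≠ 0) :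
    cornerVec n a s j ^ 2 = 0 ∨ cornerVec n a s j ^ 2 = (Real.sqrt (a ^ 2 + s))⁻¹ ^ 2 := by
  simp only [cornerVec, PiLp.toLp_apply, if_neg hj]
  split_ifs <;> simp

theorem orbitSum_cornerPoly (n : ℕ) [NeZero n] (a : ℝ) (s : ℕ) :
    orbitSum n a s (cornerPoly (Fin n) ℝ) = 0 := by
  refine sum_eq_zero fun y hy => ?_
  rw [cornerOrbit] at hy
  obtain ⟨⟨g, ε⟩, -, rfl⟩ := (@mem_image _ _ (Classical.decEq _) _ _ _).mp hy
  refine eval_cornerPoly_eq_zero (c := (Real.sqrt (a ^ 2 + s))⁻¹ ^ 2) (g.symm 0) fun m hm => ?_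
  have hgm : ((g m : Fin n) : ℕ) ≠ 0 := fun h => hm (g.eq_symm_apply.mpr (Fin.ext h))
  have hsign : ∀ x : ℝ, ((if ε m then -1 else 1) * x) ^ 2 = x ^ 2 := fun x => by
    split_ifs <;> ring
  simpa only [PiLp.toLp_apply, hsign] using sq_cornerVec_of_ne_zero n a s hgm

theorem orbitSum_one_pos (n : ℕ) (a : ℝ) (s : ℕ) : 0 < orbitSum n a s 1 := by
  simp only [orbitSum, map_one, sum_const, nsmul_eq_mul, mul_one, Nat.cast_pos, card_pos]
  exact @Nonempty.image _ _ (Classical.decEq _) _ univ_nonempty _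

open Metric

/-- On a set of infinite measure `⨍` takes the junk value `0`, which the constant polynomial `1`
rules out. -/
theorem isDesign.hausdorffMeasure_sphere_ne_top {n t k : ℕ} {a : Fin k → ℝ} {s : Fin k → ℕ}
    {W : Fin k → ℝ} (hd : isDesign n t k a s W) (hk : 0 < k) (hW : ∀ i, 0 < W i) :
    μH[(n : ℝ) - 1] (sphere (0 : EuclideanSpace ℝ (Fin n)) 1) ≠ ⊤ := by
  intro htop
  have hone := hd 1 (by simp)
  have havg : sphereAvg n 1 = 0 := by
    simp [sphereAvg, setAverage_eq, measureReal_def, htop]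
  have hsum : 0 < ∑ i, W i * orbitSum n (a i) (s i) 1 :=
    sum_pos (fun i _ => mul_pos (hW i) (orbitSum_one_pos n _ _)) ⟨⟨0, hk⟩, mem_univ _⟩
  linarith

theorem lipschitzWith_one_euclideanSpace_comp {ι κ : Type*} [Fintype ι] [Fintype κ] (e : κ → ι) :
    LipschitzWith 1 (fun (x : EuclideanSpace ℝ ι) (j : κ) => x (e j)) :=
  LipschitzWith.of_dist_le_mul fun x y => by
    simpa using (dist_pi_le_iff dist_nonneg).mpr fun j => PiLp.dist_apply_le x y (e j)

section Hemisphere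

variable {m : ℕ}

noncomputable def hemisphereChart (u : Fin m → ℝ) : EuclideanSpace ℝ (Fin (m + 1)) :=
  WithLp.toLp 2 (Fin.cons (Real.sqrt (1 - ∑ j, u j ^ 2)) u)

theorem continuous_hemisphereChart : Continuous (hemisphereChart (m := m)) :=
  (PiLp.continuous_toLp 2 _).comp
    ((Real.continuous_sqrt.comp (continuous_const.sub (by fun_prop))).finCons continuous_id)

theorem norm_sq_eq_sq_apply_zero_add_sum_sq_succ (z : EuclideanSpace ℝ (Fin (m + 1))) :
    ‖z‖ ^ 2 = z 0 ^ 2 + ∑ j : Fin m, z j.succ ^ 2 := by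
  rw [EuclideanSpace.real_norm_sq_eq, Fin.sum_univ_succ]

theorem norm_hemisphereChart {u : Fin m → ℝ} (hu : ∑ j, u j ^ 2 ≤ 1) :
    ‖hemisphereChart u‖ = 1 := by
  rw [← sq_eq_sq₀ (norm_nonneg _) zero_le_one, norm_sq_eq_sq_apply_zero_add_sum_sq_succ]
  simp [hemisphereChart, Real.sq_sqrt (sub_nonneg.mpr hu)]

theorem hemisphereChart_tail {z : EuclideanSpace ℝ (Fin (m + 1))} (hz : ‖z‖ = 1)
    (hz0 : 0 ≤ z 0) : hemisphereChart (fun j => z j.succ) = z := by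
  have hsum := norm_sq_eq_sq_apply_zero_add_sum_sq_succ z
  rw [hz, one_pow] at hsum
  ext i
  refine Fin.cases ?_ (fun j => ?_) i
  · have hrest : 1 - ∑ j : Fin m, z j.succ ^ 2 = z 0 ^ 2 := by linarith
    simp [hemisphereChart, hrest, Real.sqrt_sq hz0]
  · simp [hemisphereChart]

theorem hausdorffMeasure_sphere_inter_ball_pos {z : EuclideanSpace ℝ (Fin (m + 1))} (hz : ‖z‖ = 1)
    (hz0 : 0 < z 0) {δ : ℝ} (hδ : 0 < δ) :
    0 < μH[m] (sphere (0 : EuclideanSpace ℝ (Fin (m + 1))) 1 ∩ ball z δ) := by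
  set π : EuclideanSpace ℝ (Fin (m + 1)) → Fin m → ℝ := fun x (j : Fin m) => x j.succ
  have hU : IsOpen ({u : Fin m → ℝ | ∑ j, u j ^ 2 < 1} ∩ hemisphereChart ⁻¹' ball z δ) :=
    (isOpen_lt (by fun_prop) continuous_const).inter
      (isOpen_ball.preimage continuous_hemisphereChart)
  have hπz : π z ∈ {u : Fin m → ℝ | ∑ j, u j ^ 2 < 1} ∩ hemisphereChart ⁻¹' ball z δ := by
    have hsum := norm_sq_eq_sq_apply_zero_add_sum_sq_succ z
    rw [hz, one_pow] at hsum
    refine ⟨?_, ?_⟩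
    · change ∑ j : Fin m, z j.succ ^ 2 < 1
      nlinarith
    · simpa [π, hemisphereChart_tail hz hz0.le] using hδ
  obtain ⟨ε, hε, hball⟩ := isOpen_iff.mp hU (π z) hπz
  have hsub : ball (π z) ε ⊆ π '' (sphere 0 1 ∩ ball z δ) := fun u hu =>
    ⟨hemisphereChart u, ⟨mem_sphere_zero_iff_norm.mpr (norm_hemisphereChart (hball hu).1.le),
      (hball hu).2⟩, by ext j; simp [π, hemisphereChart]⟩
  calc 0 < μH[m] (ball (π z) ε) := by
        simpa [← hausdorffMeasure_pi_real] using measure_ball_pos volume (π z) hε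
    _ ≤ μH[m] (π '' (sphere 0 1 ∩ ball z δ)) := measure_mono hsub
    _ ≤ μH[m] (sphere 0 1 ∩ ball z δ) := by
        simpa using (lipschitzWith_one_euclideanSpace_comp Fin.succ).hausdorffMeasure_image_le
          (Nat.cast_nonneg m) (sphere 0 1 ∩ ball z δ)

end Hemisphere

theorem sphereAvg_pos {n : ℕ} {f : MvPolynomial (Fin n) ℝ}
    (hfin : μH[(n : ℝ) - 1] (sphere (0 : EuclideanSpace ℝ (Fin n)) 1) ≠ ⊤)
    (hf : ∀ x, 0 ≤ eval x f) {z : EuclideanSpace ℝ (Fin n)} (hfz : 0 < eval (fun i => z i) f)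
    (hcap : ∀ δ > 0, 0 < μH[(n : ℝ) - 1] (sphere 0 1 ∩ ball z δ)) :
    0 < sphereAvg n f := by
  set g := fun x : EuclideanSpace ℝ (Fin n) => eval (fun i => x i) f
  have hg : Continuous g := (continuous_eval f).comp (PiLp.continuous_ofLp 2 _)
  obtain ⟨δ, hδ, hball⟩ := isOpen_iff.mp (isOpen_lt continuous_const hg) z hfz
  have hint : IntegrableOn g (sphere 0 1) μH[(n : ℝ) - 1] :=
    hg.continuousOn.integrableOn_of_subset_isCompact (isCompact_sphere 0 1)
      isClosed_sphere.measurableSet subset_rfl hfin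
  rw [sphereAvg, setAverage_eq, smul_eq_mul, measureReal_def]
  refine mul_pos (inv_pos.mpr (ENNReal.toReal_pos ?_ hfin)) ?_
  · exact ((hcap δ hδ).trans_le (measure_mono Set.inter_subset_left)).ne'
  · rw [setIntegral_pos_iff_support_of_nonneg_ae (ae_of_all _ fun x => hf _) hint]
    exact (hcap δ hδ).trans_le (measure_mono fun x hx => ⟨(hball hx.2).ne', hx.1⟩)

theorem exists_norm_eq_one_eval_cornerPoly_pos {m : ℕ} (hm : 3 ≤ m) :
    ∃ z : EuclideanSpace ℝ (Fin (m + 1)),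
      ‖z‖ = 1 ∧ 0 < z 0 ∧ 0 < eval (fun i => z i) (cornerPoly (Fin (m + 1)) ℝ) := by
  set w : EuclideanSpace ℝ (Fin (m + 1)) :=
    WithLp.toLp 2 fun i => if (i : ℕ) < 4 then (i : ℝ) + 1 else 0
  have hw : w ≠ 0 := fun h => by simpa [w] using congrArg (fun v => v 0) h
  have hc : 0 < ‖w‖⁻¹ := by positivity
  refine ⟨‖w‖⁻¹ • w, norm_smul_inv_norm hw, by simp [w, hc], ?_⟩
  refine eval_cornerPoly_pos (i := ⟨0, by omega⟩) (j := ⟨1, by omega⟩) (k := ⟨2, by omega⟩)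
    (l := ⟨3, by omega⟩) (by simp) (by simp) (by simp) (by simp) ?_ ?_ ?_ ?_ <;>
  generalize ‖w‖⁻¹ = c at hc ⊢ <;> norm_num [w] <;> linarith

theorem degree_bound_of_exists_large_s_general (n t k : ℕ) (hn : 4 ≤ n) (hk : 1 ≤ k)
    (a : Fin k → ℝ) (s : Fin k → ℕ) (W : Fin k → ℝ)
    (hW : ∀ i, 0 < W i)
    (hd : isDesign n t k a s W) :
    t ≤ 15 := by
  by_contra! ht
  obtain ⟨m, rfl⟩ : ∃ m, n = m + 1 := ⟨n - 1, by omega⟩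
  have hzero : sphereAvg (m + 1) (cornerPoly (Fin (m + 1)) ℝ) = 0 := by
    simp [hd _ (totalDegree_cornerPoly_le.trans ht), orbitSum_cornerPoly]
  obtain ⟨z, hz, hz0, hPz⟩ := exists_norm_eq_one_eval_cornerPoly_pos (m := m) (by omega)
  have hcap : ∀ δ > 0, 0 < μH[((m + 1 : ℕ) : ℝ) - 1] (sphere 0 1 ∩ ball z δ) := fun δ hδ => by
    simpa using hausdorffMeasure_sphere_inter_ball_pos hz hz0 hδ
  exact (sphereAvg_pos (hd.hausdorffMeasure_sphere_ne_top hk hW) eval_cornerPoly_nonneg hPz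
    hcap).ne' hzero

/-- If some orbit has `s_i ≥ 3`, the degree is at most 15. -/
theorem degree_bound_of_exists_large_s (n t k : ℕ) (hn : 4 ≤ n) (hk : 1 ≤ k)
    (a : Fin k → ℝ) (s : Fin k → ℕ) (W : Fin k → ℝ)
    (ha : ∀ i, 0 < a i) (hs : ∀ i, s i ≤ n - 1) (hW : ∀ i, 0 < W i)
    (hbig : ∃ i, 3 ≤ s i)
    (hd : isDesign n t k a s W) :
    t ≤ 15 :=
  degree_bound_of_exists_large_s_general n t k hn hk a s W hW hd
end

section
/- The set of pairs of integers (n,s) with n ≥ 3 and s ≥ 0 such that (n+2)·s·(1-n+3s) ≥ 0 and h_ε(n,s) = 0 for some ε ∈ {1,-1} is finite. Equivalently, there are only finitely many integer pairs (n,s) with n ≥ 3 and s ≥ 0 satisfying n^4 + (6-9s)n^3 + (27s^2-30s+1)n^2 - (27s^3-54s^2-9s+24)n - 18s^3 - 36s^2 + 30s + 16 = 0. -/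
private def Pz (n s : ℤ) : ℤ :=
  n^4 + (6 - 9*s)*n^3 + (27*s^2 - 30*s + 1)*n^2
    - (27*s^3 - 54*s^2 - 9*s + 24)*n - 18*s^3 - 36*s^2 + 30*s + 16

set_option maxHeartbeats 1000000 in
private lemma key_id (n k : ℤ) :
    (81*n^4+216*n^3+216*n^2+96*n+16)
        * (27*k^4-162*k^3+351*k^2-36*n^2*k+24*n*k+92*k+72*n^2+192*n-1044)^3
      + (-483840*n^3+778320*n^2+2978880*n-2823360)
        * (27*k^4-162*k^3+351*k^2-36*n^2*k+24*n*k+92*k+72*n^2+192*n-1044)^2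
      + (-331776000*n^3+632678400*n^2+774451200*n-979353600)
        * (27*k^4-162*k^3+351*k^2-36*n^2*k+24*n*k+92*k+72*n^2+192*n-1044)
      + (-67108864000*n^3+223027200000*n^2-177143808000*n+26345472000)
    = (0 + (-42639528448) + (27393800832)*n + (12127200768)*n^2 + (-4562373600)*n^3 + (-1757998080)*n^4 + (93218688)*n^5 + (80621568)*n^6 + (7558272)*n^7 + (36171971712)*k + (-8261777088)*n*k + (-12458606112)*n^2*k + (1058099760)*n^3*k + (1693612800)*n^4*k + (55427328)*n^5*k + (-83140992)*n^6*k + (-11337408)*n^7*k + (2555463168)*k^2 + (-9171921600)*n*k^2 + (-3584720448)*n^2*k^2 + (843412176)*n^3*k^2 + (193435776)*n^4*k^2 + (11337408)*n^5*k^2 + (22674816)*n^6*k^2 + (5668704)*n^7*k^2 + (-14964284736)*k^3 + (4457382048)*n*k^3 + (6004732176)*n^2*k^3 + (-66537288)*n^3*k^3 + (-586605888)*n^4*k^3 + (-102036672)*n^5*k^3 + (-629856)*n^6*k^3 + (-944784)*n^7*k^3 + (8705379744)*k^4 + (1346264712)*n*k^4 + (-1408882896)*n^2*k^4 + (56332746)*n^3*k^4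 + (228637728)*n^4*k^4 + (58104216)*n^5*k^4 + (-2554923384)*k^5 + (-1828165788)*n*k^5 + (-664511202)*n^2*k^5 + (-210745881)*n^3*k^5 + (-37791360)*n^4*k^5 + (-14171760)*n^5*k^5 + (448107552)*k^6 + (699979968)*n*k^6 + (492389928)*n^2*k^6 + (145181808)*n^3*k^6 + (1889568)*n^4*k^6 + (1417176)*n^5*k^6 + (-48183984)*k^7 + (-141245208)*n*k^7 + (-133923132)*n^2*k^7 + (-45703926)*n^3*k^7 + (3779136)*k^8 + (14644152)*n*k^8 + (18423288)*n^2*k^8 + (7440174)*n^3*k^8 + (-157464)*k^9 + (-708588)*n*k^9 + (-1062882)*n^2*k^9 + (-531441)*n^3*k^9) * (4*n^3-42*n+48+15*k*(2-n)+12*k^2*(n-1)-k^3*(3*n+2)) := by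
  ring

set_option maxHeartbeats 2000000 in
private lemma n_bound {n s : ℤ} (hn : 3 ≤ n) (hs : 0 ≤ s) (h : Pz n s = 0) :
    n ≤ 6130000000 := by
  by_contra hc
  push_neg at hc
  have hn1 : (6130000001 : ℤ) ≤ n := hc
  have hn0 : (0 : ℤ) < n := by linarith
  set k : ℤ := 3*s - n with hk
  set t : ℤ := 27*k^4-162*k^3+351*k^2-36*n^2*k+24*n*k+92*k+72*n^2+192*n-1044 with ht
  have hF : 4*n^3-42*n+48+15*k*(2-n)+12*k^2*(n-1)-k^3*(3*n+2) = 3 * Pz n s := by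
    rw [hk]; unfold Pz; ring
  have key0 : (81*n^4+216*n^3+216*n^2+96*n+16)*t^3
      + (-483840*n^3+778320*n^2+2978880*n-2823360)*t^2
      + (-331776000*n^3+632678400*n^2+774451200*n-979353600)*t
      + (-67108864000*n^3+223027200000*n^2-177143808000*n+26345472000) = 0 := by
    rw [ht, key_id n k, hF, h, mul_zero, mul_zero]
  -- bounds on the coefficient polynomials, valid for n ≥ 3
  have hn3 : (3 : ℤ) ≤ n := hn
  have hb2 : |(-483840*n^3+778320*n^2+2978880*n-2823360 : ℤ)| ≤ 7064400*n^3 := by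
    rw [abs_le]; constructor <;> nlinarith [sq_nonneg n, mul_pos (mul_pos hn0 hn0) hn0]
  have hb1 : |(-331776000*n^3+632678400*n^2+774451200*n-979353600 : ℤ)| ≤ 2718259200*n^3 := by
    rw [abs_le]; constructor <;> nlinarith [sq_nonneg n, mul_pos (mul_pos hn0 hn0) hn0]
  have hb0 : |(-67108864000*n^3+223027200000*n^2-177143808000*n+26345472000 : ℤ)| ≤ 493625344000*n^3 := by
    rw [abs_le]; constructor <;> nlinarith [sq_nonneg n, mul_pos (mul_pos hn0 hn0) hn0]
  have hg3 : 81*n^4 ≤ 81*n^4+216*n^3+216*n^2+96*n+16 := by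
    nlinarith [pow_pos hn0 3, sq_nonneg n, hn0.le]
  set a : ℤ := |t| with hat
  have ha : 0 ≤ a := abs_nonneg t
  -- the main absolute-value inequality
  have habs : (81*n^4+216*n^3+216*n^2+96*n+16) * a^3
      ≤ 7064400*n^3*a^2 + 2718259200*n^3*a + 493625344000*n^3 := by
    have h2 : (81*n^4+216*n^3+216*n^2+96*n+16)*t^3
        = -((-483840*n^3+778320*n^2+2978880*n-2823360)*t^2
          + (-331776000*n^3+632678400*n^2+774451200*n-979353600)*t
          + (-67108864000*n^3+223027200000*n^2-177143808000*n+26345472000)) := by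
      linarith
    have h3 : (81*n^4+216*n^3+216*n^2+96*n+16) * a^3
        = |(81*n^4+216*n^3+216*n^2+96*n+16)*t^3| := by
      rw [abs_mul, abs_pow, ← hat, abs_of_nonneg (by positivity :
        (0:ℤ) ≤ 81*n^4+216*n^3+216*n^2+96*n+16)]
    rw [h3, h2, abs_neg]
    calc |(-483840*n^3+778320*n^2+2978880*n-2823360)*t^2
          + (-331776000*n^3+632678400*n^2+774451200*n-979353600)*t
          + (-67108864000*n^3+223027200000*n^2-177143808000*n+26345472000)|
        ≤ |(-483840*n^3+778320*n^2+2978880*n-2823360)*t^2|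
          + |(-331776000*n^3+632678400*n^2+774451200*n-979353600)*t|
          + |(-67108864000*n^3+223027200000*n^2-177143808000*n+26345472000)| := by
          exact (abs_add_le _ _).trans (by gcongr; exact abs_add_le _ _)
      _ ≤ 7064400*n^3*a^2 + 2718259200*n^3*a + 493625344000*n^3 := by
          rw [abs_mul, abs_mul, abs_pow]
          have e1 : |t| = a := rfl
          rw [e1]
          have ha2 : (0:ℤ) ≤ a^2 := sq_nonneg a
          gcongr
  rcases eq_or_lt_of_le ha with ha0 | ha1
  · -- t = 0 : constant term must vanish, impossible
    have ht0 : t = 0 := abs_eq_zero.mp ha0.symm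
    rw [ht0] at key0
    ring_nf at key0
    have hx3 : 6130000001*n^2 ≤ n^3 := by
      have := mul_le_mul_of_nonneg_right hn1 (sq_nonneg n)
      nlinarith [this]
    have hx2 : 6130000001*n ≤ n^2 := by
      have := mul_le_mul_of_nonneg_right hn1 hn0.le
      nlinarith [this]
    nlinarith [hx3, hx2, hn1]
  · -- |t| ≥ 1
    have ha1' : (1:ℤ) ≤ a := ha1
    have e2 : a ≤ a^2 := by nlinarith
    have e3 : a^2 ≤ a^3 := by nlinarith
    have big : 81*n^4*a^2 ≤ 496350667600*n^3*a^2 := by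
      have s1 : 81*n^4*a^2 ≤ 81*n^4*a^3 := by
        have : (0:ℤ) ≤ 81*n^4 := by positivity
        exact mul_le_mul_of_nonneg_left e3 this
      have s2 : 2718259200*n^3*a ≤ 2718259200*n^3*a^2 := by
        have : (0:ℤ) ≤ 2718259200*n^3 := by positivity
        exact mul_le_mul_of_nonneg_left e2 this
      have s3 : (493625344000:ℤ)*n^3 ≤ 493625344000*n^3*a^2 := by
        have h1 : (0:ℤ) < 493625344000*n^3 := by positivity
        nlinarith
      have s4 : (81*n^4+216*n^3+216*n^2+96*n+16) * a^3 ≥ 81*n^4*a^3 := by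
        have h9 : (0:ℤ) ≤ a^3 := by positivity
        nlinarith [mul_le_mul_of_nonneg_right hg3 h9]
      linarith
    have hpos : (0:ℤ) < n^3*a^2 := by positivity
    have step : 6130000001*(n^3*a^2) ≤ n^4*a^2 := by
      nlinarith [mul_le_mul_of_nonneg_right hn1 hpos.le]
    nlinarith [big, step, hpos]

set_option maxHeartbeats 2000000 in
private lemma s_bound {n s : ℤ} (hn : 3 ≤ n) (hs : 0 ≤ s) (h : Pz n s = 0) :
    s ≤ n^2 := by
  by_contra hc
  push_neg at hc
  have hc1 : n^2 + 1 ≤ s := hc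
  have hs2 : (n^2+1)^2 ≤ s^2 := by nlinarith
  have key : Pz n s < 0 := by
    unfold Pz
    nlinarith [mul_nonneg (mul_nonneg (by nlinarith : (0:ℤ) ≤ 27*n+18) (sq_nonneg s))
        (by linarith : (0:ℤ) ≤ s - n^2 - 1),
      mul_nonneg (by nlinarith : (0:ℤ) ≤ 9*n^3+30*n^2-9*n-30) hs,
      mul_nonneg (by nlinarith [sq_nonneg n] : (0:ℤ) ≤ 27*n^3-9*n^2-27*n+54)
        (by nlinarith : (0:ℤ) ≤ s^2 - (n^2+1)^2),
      sq_nonneg n, sq_nonneg s, mul_pos (by positivity : (0:ℤ) < n^2) (by positivity : (0:ℤ) < n)]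
  omega

/-- Finiteness of parameter pairs for single-orbit 7-designs. -/
theorem finitely_many_pairs :
    {p : ℕ × ℕ | 3 ≤ p.1 ∧ ∃ ε : ℝ, (ε = 1 ∨ ε = -1) ∧
        0 ≤ ((p.1 : ℝ) + 2) * p.2 * (1 - p.1 + 3 * p.2) ∧
        (p.1 : ℝ) ^ 3 + (2 - 9 * p.2) * (p.1 : ℝ) ^ 2
            + (12 * (p.2 : ℝ) ^ 2 - 9 * p.2 - 7) * p.1
            + 6 * (p.2 : ℝ) ^ 2 + 18 * p.2 + 4
          + ε * ((p.1 : ℝ) ^ 2 - 3 * ((p.2 : ℝ) - 2) * p.1 - 3 * p.2 - 7) *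
              Real.sqrt (((p.1 : ℝ) + 2) * p.2 * (1 - p.1 + 3 * p.2)) = 0}.Finite ∧
    {p : ℕ × ℕ | 3 ≤ p.1 ∧
        (p.1 : ℝ) ^ 4 + (6 - 9 * p.2) * (p.1 : ℝ) ^ 3
            + (27 * (p.2 : ℝ) ^ 2 - 30 * p.2 + 1) * (p.1 : ℝ) ^ 2
            - (27 * (p.2 : ℝ) ^ 3 - 54 * (p.2 : ℝ) ^ 2 - 9 * p.2 + 24) * p.1
            - 18 * (p.2 : ℝ) ^ 3 - 36 * (p.2 : ℝ) ^ 2 + 30 * p.2 + 16 = 0}.Finite := by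
  have finite2 : {p : ℕ × ℕ | 3 ≤ p.1 ∧
        (p.1 : ℝ) ^ 4 + (6 - 9 * p.2) * (p.1 : ℝ) ^ 3
            + (27 * (p.2 : ℝ) ^ 2 - 30 * p.2 + 1) * (p.1 : ℝ) ^ 2
            - (27 * (p.2 : ℝ) ^ 3 - 54 * (p.2 : ℝ) ^ 2 - 9 * p.2 + 24) * p.1
            - 18 * (p.2 : ℝ) ^ 3 - 36 * (p.2 : ℝ) ^ 2 + 30 * p.2 + 16 = 0}.Finite := by
    apply Set.Finite.subset
      (Set.finite_Icc ((0,0) : ℕ × ℕ) ((6130000000, 37576900000000000000) : ℕ × ℕ))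
    rintro ⟨n, s⟩ ⟨hn, heq⟩
    have hcast : ((Pz (n:ℤ) (s:ℤ) : ℤ) : ℝ)
        = (n : ℝ) ^ 4 + (6 - 9 * s) * (n : ℝ) ^ 3
            + (27 * (s : ℝ) ^ 2 - 30 * s + 1) * (n : ℝ) ^ 2
            - (27 * (s : ℝ) ^ 3 - 54 * (s : ℝ) ^ 2 - 9 * s + 24) * n
            - 18 * (s : ℝ) ^ 3 - 36 * (s : ℝ) ^ 2 + 30 * s + 16 := by
      unfold Pz; push_cast; ring
    have hPz : Pz (n:ℤ) (s:ℤ) = 0 := by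
      have : ((Pz (n:ℤ) (s:ℤ) : ℤ) : ℝ) = 0 := by rw [hcast]; exact heq
      exact_mod_cast this
    have hn' : (3:ℤ) ≤ (n:ℤ) := by exact_mod_cast hn
    have hs' : (0:ℤ) ≤ (s:ℤ) := by positivity
    have h1 := n_bound hn' hs' hPz
    have h2 := s_bound hn' hs' hPz
    have hsZ : (s:ℤ) ≤ 37576900000000000000 := by nlinarith
    simp only [Set.mem_Icc, Prod.le_def]
    refine ⟨⟨Nat.zero_le _, Nat.zero_le _⟩, ?_, ?_⟩
    · exact_mod_cast h1
    · exact_mod_cast hsZ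
  refine ⟨?_, finite2⟩
  apply finite2.subset
  rintro ⟨n, s⟩ ⟨hn, ε, hε, hD, heq⟩
  refine ⟨hn, ?_⟩
  set x : ℝ := (n : ℝ) with hx
  set y : ℝ := (s : ℝ) with hy
  set A : ℝ := x ^ 3 + (2 - 9 * y) * x ^ 2 + (12 * y ^ 2 - 9 * y - 7) * x
      + 6 * y ^ 2 + 18 * y + 4 with hA
  set B : ℝ := x ^ 2 - 3 * (y - 2) * x - 3 * y - 7 with hB
  set D : ℝ := (x + 2) * y * (1 - x + 3 * y) with hDdef
  have heq' : A + ε * B * Real.sqrt D = 0 := heq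
  have h1 : A = -(ε * B * Real.sqrt D) := by linarith
  have h2 : A ^ 2 = ε ^ 2 * B ^ 2 * Real.sqrt D ^ 2 := by rw [h1]; ring
  have hε2 : ε ^ 2 = 1 := by rcases hε with rfl | rfl <;> norm_num
  have hsq : A ^ 2 = B ^ 2 * D := by
    rw [hε2, Real.sq_sqrt hD] at h2; linarith
  have hid : ((y + 1) * (x - 1) ^ 2) *
      (x ^ 4 + (6 - 9 * y) * x ^ 3 + (27 * y ^ 2 - 30 * y + 1) * x ^ 2
        - (27 * y ^ 3 - 54 * y ^ 2 - 9 * y + 24) * x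
        - 18 * y ^ 3 - 36 * y ^ 2 + 30 * y + 16)
      = A ^ 2 - B ^ 2 * D := by
    rw [hA, hB, hDdef]; ring
  rw [hsq, sub_self] at hid
  have hy0 : (0:ℝ) ≤ y := by rw [hy]; positivity
  have hx3 : (3:ℝ) ≤ x := by rw [hx]; exact_mod_cast hn
  have hne : ((y + 1) * (x - 1) ^ 2) ≠ 0 := by
    have h2' : (0:ℝ) < (x - 1) ^ 2 := pow_pos (by linarith) 2
    exact ne_of_gt (mul_pos (by linarith) h2')
  rcases mul_eq_zero.mp hid with hzero | hP
  · exact absurd hzero hne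
  · exact hP
end
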